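/- (Lemma B.4) Let s ∈ (0,1), let N be an integer with 2s < N < 4s, let Ω ⊂ ℝ^N be a bounded open set, let K ⊂ Ω be compact, and let b ∈ C(Ω̄) ∩ C¹(Ω). Set α_{N,s} := ∫_{ℝ^N} U_{0,1}(y) h(y) dy, which is a finite number. Then lim_{λ→∞} sup_{x∈K} | λ^{2s} ∫_Ω b(y) U_{x,λ}(y) λ^{(N−2s)/2} h(λ(x−y)) dy − α_{N,s} b(x) | = 0. -/

import Mathlib

open MeasureTheory Real

noncomputable section

abbrev Euc (N : ℕ) := EuclideanSpace ℝ (Fin N)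

/-- The Aubin–Talenti bubble `U_{x,λ}(y) = (λ/(1+λ²|x-y|²))^{(N-2s)/2}`. -/
def bubble (N : ℕ) (s : ℝ) (x : Euc N) (lam : ℝ) (y : Euc N) : ℝ :=
  (lam / (1 + lam ^ 2 * ‖x - y‖ ^ 2)) ^ (((N : ℝ) - 2 * s) / 2)

/-- The bubble–Green discrepancy `h(z) = |z|^{-(N-2s)} - (1+|z|²)^{-(N-2s)/2}`. -/
def hfun (N : ℕ) (s : ℝ) (z : Euc N) : ℝ :=
  ‖z‖ ^ (-((N : ℝ) - 2 * s)) - (1 + ‖z‖ ^ 2) ^ (-(((N : ℝ) - 2 * s) / 2))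

/-!
The substitution `y = x - λ⁻¹ z` turns the rescaled integral into
`∫ (1_Ω b)(x - λ⁻¹ z) U_{0,1}(z) h(z) dz`, so the statement is an approximate-identity result for
the kernel `U_{0,1} h`. The kernel is integrable: near `0` it is bounded by `|z|^{-(N-2s)}`, and
since `h(z) ≤ (N-2s)/2 · |z|^{-(N-2s)-2}` it decays like `|z|^{-2(N-2s)-2}`, which is integrable at
infinity because `s < 1`. Uniformity in `x ∈ K` comes from the uniform continuity of `1_Ω b` at the
points of the compact set `K ⊆ Ω` together with a cut-off of the tail of the kernel.
-/

open Set Metric Filter Topology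

lemma one_sub_one_add_rpow_neg_le {q u : ℝ} (hq : 0 ≤ q) (hu : 0 ≤ u) :
    1 - (1 + u) ^ (-q) ≤ q * u := by
  have hlog : log (1 + u) ≤ u := by linarith [log_le_sub_one_of_pos (by linarith : 0 < 1 + u)]
  have hexp : 1 - q * log (1 + u) ≤ (1 + u) ^ (-q) := by
    rw [rpow_def_of_pos (by linarith)]
    linarith [add_one_le_exp (log (1 + u) * -q)]
  nlinarith

lemma rpow_neg_sub_one_add_rpow_neg_le {q t : ℝ} (hq : 0 ≤ q) (ht : 0 < t) :
    t ^ (-q) - (1 + t) ^ (-q) ≤ q * t ^ (-q - 1) := by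
  have hsplit : (1 + t) ^ (-q) = t ^ (-q) * (1 + t⁻¹) ^ (-q) := by
    rw [← mul_rpow ht.le (by positivity), mul_add, mul_inv_cancel₀ ht.ne', mul_one, add_comm]
  have htq : t ^ (-q - 1) = t ^ (-q) * t⁻¹ := by
    rw [rpow_sub ht, rpow_one, div_eq_mul_inv]
  rw [hsplit, htq]
  have := one_sub_one_add_rpow_neg_le hq (inv_nonneg.2 ht.le)
  have h0 : 0 ≤ t ^ (-q) := rpow_nonneg ht.le _
  nlinarith

lemma norm_rpow_neg_eq_sq_rpow {E : Type*} [SeminormedAddCommGroup E] (z : E) (c : ℝ) :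
    ‖z‖ ^ (-c) = (‖z‖ ^ 2) ^ (-(c / 2)) := by
  rw [← rpow_natCast_mul (norm_nonneg z)]
  congr 1
  push_cast
  ring

section BubbleProfile

variable {N : ℕ} {s : ℝ}

lemma bubble_zero_one (z : Euc N) :
    bubble N s 0 1 z = (1 + ‖z‖ ^ 2) ^ (-(((N : ℝ) - 2 * s) / 2)) := by
  rw [bubble, zero_sub, norm_neg, one_pow, one_mul, one_div, inv_rpow (by positivity),
    ← rpow_neg (by positivity)]

lemma bubble_eq_rpow_mul_bubble_zero_one {lam : ℝ} (hlam : 0 ≤ lam) (x y : Euc N) :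
    bubble N s x lam y
      = lam ^ (((N : ℝ) - 2 * s) / 2) * bubble N s 0 1 (lam • (x - y)) := by
  rw [bubble_zero_one, bubble, div_rpow hlam (by positivity), div_eq_mul_inv,
    ← rpow_neg (by positivity), norm_smul, norm_of_nonneg hlam, mul_pow]

lemma hfun_eq_sq_rpow (z : Euc N) :
    hfun N s z = (‖z‖ ^ 2) ^ (-(((N : ℝ) - 2 * s) / 2))
      - (1 + ‖z‖ ^ 2) ^ (-(((N : ℝ) - 2 * s) / 2)) := by
  rw [hfun, norm_rpow_neg_eq_sq_rpow]

lemma hfun_nonneg (hs : 2 * s ≤ N) {z : Euc N} (hz : z ≠ 0) : 0 ≤ hfun N s z := by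
  rw [hfun_eq_sq_rpow, sub_nonneg]
  exact rpow_le_rpow_of_nonpos (by positivity) (by linarith) (by linarith)

lemma hfun_le_norm_rpow (z : Euc N) : hfun N s z ≤ ‖z‖ ^ (-((N : ℝ) - 2 * s)) := by
  rw [hfun, sub_le_self_iff]
  positivity

lemma hfun_le_norm_rpow_sub_two (hs : 2 * s ≤ N) {z : Euc N} (hz : z ≠ 0) :
    hfun N s z ≤ ((N : ℝ) - 2 * s) / 2 * ‖z‖ ^ (-(((N : ℝ) - 2 * s) + 2)) := by
  rw [hfun_eq_sq_rpow, norm_rpow_neg_eq_sq_rpow z (((N : ℝ) - 2 * s) + 2)]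
  have hq : 0 ≤ ((N : ℝ) - 2 * s) / 2 := by linarith
  convert rpow_neg_sub_one_add_rpow_neg_le hq (by positivity : 0 < ‖z‖ ^ 2) using 3
  ring

end BubbleProfile

section Integrability

variable {N : ℕ} {s : ℝ}

lemma bubble_zero_one_nonneg (z : Euc N) : 0 ≤ bubble N s 0 1 z := by
  rw [bubble_zero_one]; positivity

lemma abs_bubble_zero_one_mul_hfun_le (hs : 2 * s ≤ N) {z : Euc N} (hz : z ≠ 0) :
    |bubble N s 0 1 z * hfun N s z| ≤ ‖z‖ ^ (-((N : ℝ) - 2 * s)) := by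
  have hU1 : bubble N s 0 1 z ≤ 1 := by
    rw [bubble_zero_one]
    exact rpow_le_one_of_one_le_of_nonpos (by simp) (by linarith)
  rw [abs_of_nonneg (mul_nonneg (bubble_zero_one_nonneg z) (hfun_nonneg hs hz))]
  calc bubble N s 0 1 z * hfun N s z ≤ 1 * ‖z‖ ^ (-((N : ℝ) - 2 * s)) :=
        mul_le_mul hU1 (hfun_le_norm_rpow z) (hfun_nonneg hs hz) zero_le_one
    _ = ‖z‖ ^ (-((N : ℝ) - 2 * s)) := one_mul _

lemma abs_bubble_zero_one_mul_hfun_le_of_one_le_norm (hs : 2 * s ≤ N) {z : Euc N}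
    (hz : 1 ≤ ‖z‖) :
    |bubble N s 0 1 z * hfun N s z|
      ≤ ((N : ℝ) - 2 * s) / 2 * 2 ^ (((N : ℝ) - 2 * s) / 2 + 1)
        * (1 + ‖z‖ ^ 2) ^ (-(2 * ((N : ℝ) - 2 * s) + 2) / 2) := by
  set q : ℝ := ((N : ℝ) - 2 * s) / 2 with hq_def
  have hq : 0 ≤ q := by linarith
  have hz0 : z ≠ 0 := norm_pos_iff.1 (by linarith)
  have ht : (1 + ‖z‖ ^ 2) / 2 ≤ ‖z‖ ^ 2 := by nlinarith
  have hdecay : ‖z‖ ^ (-((N : ℝ) - 2 * s + 2))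
      ≤ 2 ^ (q + 1) * (1 + ‖z‖ ^ 2) ^ (-(q + 1)) :=
    calc ‖z‖ ^ (-((N : ℝ) - 2 * s + 2)) = (‖z‖ ^ 2) ^ (-(q + 1)) := by
          rw [norm_rpow_neg_eq_sq_rpow, hq_def]; ring_nf
      _ ≤ ((1 + ‖z‖ ^ 2) / 2) ^ (-(q + 1)) :=
          rpow_le_rpow_of_nonpos (by positivity) ht (by linarith)
      _ = 2 ^ (q + 1) * (1 + ‖z‖ ^ 2) ^ (-(q + 1)) := by
          rw [div_rpow (by positivity) zero_le_two, rpow_neg zero_le_two,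
            div_eq_mul_inv, inv_inv, mul_comm]
  have hh : hfun N s z ≤ q * (2 ^ (q + 1) * (1 + ‖z‖ ^ 2) ^ (-(q + 1))) :=
    (hfun_le_norm_rpow_sub_two hs hz0).trans (mul_le_mul_of_nonneg_left hdecay hq)
  rw [abs_of_nonneg (mul_nonneg (bubble_zero_one_nonneg z) (hfun_nonneg hs hz0)),
    bubble_zero_one]
  calc (1 + ‖z‖ ^ 2) ^ (-q) * hfun N s z
      ≤ (1 + ‖z‖ ^ 2) ^ (-q) * (q * (2 ^ (q + 1) * (1 + ‖z‖ ^ 2) ^ (-(q + 1)))) :=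
        mul_le_mul_of_nonneg_left hh (by positivity)
    _ = q * 2 ^ (q + 1) * ((1 + ‖z‖ ^ 2) ^ (-q) * (1 + ‖z‖ ^ 2) ^ (-(q + 1))) := by ring
    _ = q * 2 ^ (q + 1) * (1 + ‖z‖ ^ 2) ^ (-(2 * ((N : ℝ) - 2 * s) + 2) / 2) := by
        rw [← rpow_add (by positivity), hq_def]; ring_nf

theorem integrable_bubble_zero_one_mul_hfun (hs0 : 0 < s) (hs1 : s < 1) (hN : 2 * s < N) :
    Integrable (fun z : Euc N => bubble N s 0 1 z * hfun N s z) := by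
  have hdim : 1 ≤ Module.finrank ℝ (Euc N) := by
    rw [finrank_euclideanSpace_fin, Nat.one_le_iff_ne_zero]
    rintro rfl
    norm_num at hN
    linarith
  have : Nontrivial (Euc N) := Module.nontrivial_of_finrank_pos hdim
  have hmeas : AEStronglyMeasurable (fun z : Euc N => bubble N s 0 1 z * hfun N s z) :=
    (by unfold bubble hfun; fun_prop : Measurable _).aestronglyMeasurable
  rw [← integrableOn_univ, ← union_compl_self (ball (0 : Euc N) 1)]
  refine .union ?_ ?_
  · refine integrableOn_ball_of_norm_le_rpow hdim (C := 1) (α := (N : ℝ) - 2 * s) ?_ ?_ hmeas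
    · rw [finrank_euclideanSpace_fin]; linarith
    · refine ae_restrict_of_ae ?_
      filter_upwards [compl_mem_ae_iff.2 (measure_singleton (0 : Euc N))] with z hz
      rw [one_mul]
      exact abs_bubble_zero_one_mul_hfun_le hN.le hz
  · refine Integrable.mono' ((integrable_rpow_neg_one_add_norm_sq
      (r := 2 * ((N : ℝ) - 2 * s) + 2) ?_).const_mul
      (((N : ℝ) - 2 * s) / 2 * 2 ^ (((N : ℝ) - 2 * s) / 2 + 1))).integrableOn hmeas.restrict ?_
    · rw [finrank_euclideanSpace_fin]; linarith
    · filter_upwards [ae_restrict_mem measurableSet_ball.compl] with z hz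
      exact abs_bubble_zero_one_mul_hfun_le_of_one_le_norm hN.le (by simpa using hz)

end Integrability

lemma integral_mul_comp_smul_sub {E : Type*} [NormedAddCommGroup E] [NormedSpace ℝ E]
    [MeasurableSpace E] [BorelSpace E] [FiniteDimensional ℝ E] (μ : Measure E)
    [μ.IsAddHaarMeasure] (g f : E → ℝ) (x : E) {lam : ℝ} (hlam : 0 < lam) :
    lam ^ Module.finrank ℝ E * ∫ y, g y * f (lam • (x - y)) ∂μ
      = ∫ z, g (x - lam⁻¹ • z) * f z ∂μ := by
  have hscale := Measure.integral_comp_smul μ (fun w => g (x - w) * f (lam • w)) lam⁻¹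
  have hreflect := integral_sub_left_eq_self (fun y => g y * f (lam • (x - y))) μ x
  simp only [sub_sub_cancel] at hreflect
  simp only [smul_smul, mul_inv_cancel₀ hlam.ne', one_smul, inv_pow, inv_inv,
    abs_of_pos (pow_pos hlam _), smul_eq_mul] at hscale
  rw [hscale, hreflect]

lemma rpow_mul_setIntegral_bubble_hfun_eq_integral_indicator {N : ℕ} {s : ℝ}
    {Ω : Set (Euc N)} (hΩ : MeasurableSet Ω) (b : Euc N → ℝ) (x : Euc N) {lam : ℝ}
    (hlam : 0 < lam) :
    lam ^ (2 * s) * (∫ y in Ω, b y * bubble N s x lam y * lam ^ (((N : ℝ) - 2 * s) / 2) *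
        hfun N s (lam • (x - y)))
      = ∫ z, Ω.indicator b (x - lam⁻¹ • z) * (bubble N s 0 1 z * hfun N s z) := by
  have hsplit : lam ^ ((N : ℝ) - 2 * s)
      = lam ^ (((N : ℝ) - 2 * s) / 2) * lam ^ (((N : ℝ) - 2 * s) / 2) := by
    rw [← rpow_add hlam, add_halves]
  have hpt : ∀ y, Ω.indicator (fun y => b y * bubble N s x lam y *
      lam ^ (((N : ℝ) - 2 * s) / 2) * hfun N s (lam • (x - y))) y
      = lam ^ ((N : ℝ) - 2 * s) * (Ω.indicator b y *
        (bubble N s 0 1 (lam • (x - y)) * hfun N s (lam • (x - y)))) := by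
    intro y
    by_cases hy : y ∈ Ω
    · rw [indicator_of_mem hy, indicator_of_mem hy, bubble_eq_rpow_mul_bubble_zero_one hlam.le,
        hsplit]
      ring
    · simp [hy]
  rw [← integral_indicator hΩ, integral_congr_ae (.of_forall hpt), integral_const_mul,
    ← mul_assoc, ← rpow_add hlam, add_sub_cancel, rpow_natCast]
  simpa only [finrank_euclideanSpace_fin] using integral_mul_comp_smul_sub volume
    (Ω.indicator b) (fun z => bubble N s 0 1 z * hfun N s z) x hlam

lemma tendsto_setIntegral_compl_closedBall {X G : Type*} [PseudoMetricSpace X]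
    [MeasurableSpace X] [OpensMeasurableSpace X] {μ : Measure X} [NormedAddCommGroup G]
    [NormedSpace ℝ G] {f : X → G} (hf : Integrable f μ) (x : X) :
    Tendsto (fun R : ℝ => ∫ z in (closedBall x R)ᶜ, f z ∂μ) atTop (𝓝 0) := by
  have hlim := tendsto_setIntegral_of_antitone (μ := μ) (f := f)
    (s := fun R : ℝ => (closedBall x R)ᶜ) (fun _ => measurableSet_closedBall.compl)
    (fun _ _ h => compl_subset_compl.2 (closedBall_subset_closedBall h)) ⟨0, hf.integrableOn⟩
  have hempty : ⋂ R : ℝ, (closedBall x R)ᶜ = ∅ :=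
    eq_empty_of_forall_notMem fun z hz => mem_iInter.1 hz (dist z x) (mem_closedBall.2 le_rfl)
  rwa [hempty, Measure.restrict_empty, integral_zero_measure] at hlim

lemma abs_integral_mul_le_of_abs_le {α : Type*} [MeasurableSpace α] {μ : Measure α}
    {φ f : α → ℝ} (hφ : AEStronglyMeasurable φ μ) (hf : Integrable f μ) {S : Set α}
    (hS : MeasurableSet S) {η M : ℝ}
    (hnear : ∀ z ∈ S, |φ z| ≤ η) (hfar : ∀ z, |φ z| ≤ M) :
    |∫ z, φ z * f z ∂μ| ≤ η * ∫ z in S, |f z| ∂μ + M * ∫ z in Sᶜ, |f z| ∂μ := by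
  have hφf : Integrable (fun z => |φ z| * |f z|) μ := by
    simpa only [abs_mul] using (hf.bdd_mul hφ (.of_forall hfar)).abs
  calc |∫ z, φ z * f z ∂μ| ≤ ∫ z, |φ z| * |f z| ∂μ := by
        simpa only [abs_mul] using abs_integral_le_integral_abs (f := fun z => φ z * f z)
    _ = ∫ z in S, |φ z| * |f z| ∂μ + ∫ z in Sᶜ, |φ z| * |f z| ∂μ :=
        (integral_add_compl hS hφf).symm
    _ ≤ ∫ z in S, η * |f z| ∂μ + ∫ z in Sᶜ, M * |f z| ∂μ := by
        gcongr ?_ + ?_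
        · exact setIntegral_mono_on hφf.integrableOn (hf.abs.const_mul η).integrableOn hS
            fun z hz => mul_le_mul_of_nonneg_right (hnear z hz) (abs_nonneg _)
        · exact setIntegral_mono_on hφf.integrableOn (hf.abs.const_mul M).integrableOn hS.compl
            fun z _ => mul_le_mul_of_nonneg_right (hfar z) (abs_nonneg _)
    _ = η * ∫ z in S, |f z| ∂μ + M * ∫ z in Sᶜ, |f z| ∂μ := by
        rw [integral_const_mul, integral_const_mul]

theorem tendstoUniformlyOn_integral_comp_sub_inv_smul_mul {E : Type*} [NormedAddCommGroup E]
    [NormedSpace ℝ E] [MeasurableSpace E] [BorelSpace E] {μ : Measure E} {f g : E → ℝ}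
    (hf : Integrable f μ) (hg : Measurable g) {M : ℝ} (hgM : ∀ y, |g y| ≤ M) {K : Set E}
    (hK : IsCompact K) (hgK : ∀ x ∈ K, ContinuousAt g x) :
    TendstoUniformlyOn (fun (lam : ℝ) (x : E) => ∫ z, g (x - lam⁻¹ • z) * f z ∂μ)
      (fun x => (∫ z, f z ∂μ) * g x) atTop K := by
  rw [Metric.tendstoUniformlyOn_iff]
  intro ε hε
  have hM : 0 ≤ M := (abs_nonneg _).trans (hgM 0)
  set I := ∫ z, |f z| ∂μ
  have hI : 0 ≤ I := integral_nonneg fun z => abs_nonneg _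
  set η := ε / (2 * (I + 2 * M + 1))
  have hη : 0 < η := by positivity
  obtain ⟨δ, hδ, hgδ⟩ := Metric.mem_uniformity_dist.1
    (hK.uniformContinuousAt_of_continuousAt g hgK (dist_mem_uniformity hη))
  obtain ⟨R, hR⟩ :=
    ((tendsto_setIntegral_compl_closedBall hf.abs 0).eventually (gt_mem_nhds hη)).exists
  filter_upwards [eventually_gt_atTop 0, eventually_gt_atTop (R / δ)] with lam hlam hlamR x hx
  have hnear : ∀ z ∈ closedBall 0 R, |g (x - lam⁻¹ • z) - g x| ≤ η := by
    intro z hz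
    have hdist : dist x (x - lam⁻¹ • z) < δ := by
      rw [dist_eq_norm, sub_sub_cancel, norm_smul, norm_inv, norm_of_nonneg hlam.le,
        inv_mul_lt_iff₀ hlam]
      have := (div_lt_iff₀ hδ).1 hlamR
      linarith [mem_closedBall_zero_iff.1 hz]
    rw [abs_sub_comm, ← Real.dist_eq]
    exact (hgδ hdist hx).le
  have hfar : ∀ z, |g (x - lam⁻¹ • z) - g x| ≤ 2 * M := fun z =>
    (abs_sub _ _).trans (by linarith [hgM (x - lam⁻¹ • z), hgM x])
  have hgm : AEStronglyMeasurable (fun z => g (x - lam⁻¹ • z) - g x) μ :=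
    ((hg.comp (by fun_prop)).sub_const _).aestronglyMeasurable
  have hgf : Integrable (fun z => g (x - lam⁻¹ • z) * f z) μ :=
    hf.bdd_mul (hg.comp (by fun_prop)).aestronglyMeasurable (.of_forall fun z => hgM _)
  calc dist ((∫ z, f z ∂μ) * g x) (∫ z, g (x - lam⁻¹ • z) * f z ∂μ)
      = |∫ z, (g (x - lam⁻¹ • z) - g x) * f z ∂μ| := by
        rw [dist_comm, Real.dist_eq, integral_congr_ae (.of_forall fun z => sub_mul _ _ (f z)),
          integral_sub hgf (hf.const_mul (g x)), integral_const_mul, mul_comm]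
    _ ≤ η * ∫ z in closedBall 0 R, |f z| ∂μ + 2 * M * ∫ z in (closedBall 0 R)ᶜ, |f z| ∂μ :=
        abs_integral_mul_le_of_abs_le hgm hf measurableSet_closedBall hnear hfar
    _ ≤ η * I + 2 * M * η := by
        gcongr
        exact setIntegral_le_integral hf.abs (.of_forall fun z => abs_nonneg _)
    _ < ε := by
        have : η * (I + 2 * M + 1) = ε / 2 := by
          simp only [η]; field_simp
        nlinarith

lemma ContinuousOn.measurable_indicator {X : Type*} [TopologicalSpace X] [MeasurableSpace X]
    [OpensMeasurableSpace X] {s : Set X} {f : X → ℝ} (hf : ContinuousOn f s)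
    (hs : MeasurableSet s) : Measurable (s.indicator f) := by
  classical
  rw [← piecewise_eq_indicator]
  exact hf.measurable_piecewise continuousOn_const hs

theorem statement12_general (N : ℕ) (s : ℝ) (hs0 : 0 < s) (hs1 : s < 1)
    (hN1 : 2 * s < (N : ℝ))
    (Ω : Set (Euc N)) (hΩo : IsOpen Ω) (hΩb : Bornology.IsBounded Ω)
    (K : Set (Euc N)) (hK : IsCompact K) (hKΩ : K ⊆ Ω)
    (b : Euc N → ℝ) (hb₁ : ContinuousOn b (closure Ω)) :
    Integrable (fun y : Euc N => bubble N s 0 1 y * hfun N s y) (volume : Measure (Euc N)) ∧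
      ∀ ε : ℝ, 0 < ε → ∃ Λ : ℝ, ∀ lam : ℝ, Λ ≤ lam → ∀ x ∈ K,
        |lam ^ (2 * s) *
            (∫ y in Ω, b y * bubble N s x lam y * lam ^ (((N : ℝ) - 2 * s) / 2) *
              hfun N s (lam • (x - y))) -
          (∫ y : Euc N, bubble N s 0 1 y * hfun N s y) * b x| < ε := by
  have hint := integrable_bubble_zero_one_mul_hfun hs0 hs1 hN1
  refine ⟨hint, fun ε hε => ?_⟩
  have hbΩ : ContinuousOn b Ω := hb₁.mono subset_closure
  obtain ⟨M, hM⟩ := hΩb.isCompact_closure.exists_bound_of_continuousOn hb₁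
  have hbound : ∀ y, |Ω.indicator b y| ≤ max M 0 := by
    intro y
    by_cases hy : y ∈ Ω
    · simpa [hy] using (hM y (subset_closure hy)).trans (le_max_left M 0)
    · simp [hy]
  have hunif := tendstoUniformlyOn_integral_comp_sub_inv_smul_mul hint
    (hbΩ.measurable_indicator hΩo.measurableSet) hbound hK
    fun x hx => (hbΩ.mono interior_subset).continuousAt_indicator
      fun hfr => hfr.2 (hΩo.interior_eq.symm ▸ hKΩ hx)
  obtain ⟨Λ, hΛ⟩ := eventually_atTop.1
    ((Metric.tendstoUniformlyOn_iff.1 hunif ε hε).and (eventually_gt_atTop 0))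
  refine ⟨Λ, fun lam hlam x hx => ?_⟩
  obtain ⟨hclose, hlam0⟩ := hΛ lam hlam
  rw [rpow_mul_setIntegral_bubble_hfun_eq_integral_indicator hΩo.measurableSet b x hlam0,
    ← indicator_of_mem (hKΩ hx) b, ← Real.dist_eq, dist_comm]
  exact hclose x hx

/-- Lemma B.4: `α_{N,s} := ∫_{ℝ^N} U_{0,1} h` is finite, and for
`b ∈ C(Ω̄) ∩ C¹(Ω)`,
`λ^{2s} ∫_Ω b(y) U_{x,λ}(y) λ^{(N-2s)/2} h(λ(x-y)) dy → α_{N,s} b(x)` as `λ → ∞`,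
uniformly for `x` in a compact subset `K ⊆ Ω`. -/
theorem statement12 (N : ℕ) (s : ℝ) (hs0 : 0 < s) (hs1 : s < 1)
    (hN1 : 2 * s < (N : ℝ)) (hN2 : (N : ℝ) < 4 * s)
    (Ω : Set (Euc N)) (hΩo : IsOpen Ω) (hΩb : Bornology.IsBounded Ω)
    (K : Set (Euc N)) (hK : IsCompact K) (hKΩ : K ⊆ Ω)
    (b : Euc N → ℝ) (hb₁ : ContinuousOn b (closure Ω)) (hb₂ : ContDiffOn ℝ 1 b Ω) :
    Integrable (fun y : Euc N => bubble N s 0 1 y * hfun N s y) (volume : Measure (Euc N)) ∧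
      ∀ ε : ℝ, 0 < ε → ∃ Λ : ℝ, ∀ lam : ℝ, Λ ≤ lam → ∀ x ∈ K,
        |lam ^ (2 * s) *
            (∫ y in Ω, b y * bubble N s x lam y * lam ^ (((N : ℝ) - 2 * s) / 2) *
              hfun N s (lam • (x - y))) -
          (∫ y : Euc N, bubble N s 0 1 y * hfun N s y) * b x| < ε :=
  statement12_general N s hs0 hs1 hN1 Ω hΩo hΩb K hK hKΩ b hb₁
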